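/- arXiv:2308.09938 — 5 statements merged into one kernel-verified Lean document; each statement's English description precedes it below -/
import Mathlib

section
/- Let d ≥ 1, α ∈ [0, d), and let U be a nonnegative locally integrable function on ℝ^d. Let x₀ ∈ ℝ^d, ρ > 0 and λ > 0, and assume there exists x₁ ∈ B_ρ(x₀) such that M_α U(x₁) ≤ λ. Then for every real a > 3^d, |B_ρ(x₀) ∩ {M_α U > aλ}| ≤ |B_ρ(x₀) ∩ {M_α^ρ(χ_{B_{2ρ}(x₀)} U) > aλ}|, where |·| denotes Lebesgue measure. -/
open MeasureTheory Metric
open scoped ENNReal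

/-- The fractional maximal function `M_α g (x) = sup_{ρ>0} ρ^α ⨍_{B_ρ(x)} |g|`. -/
noncomputable def fracMax (d : ℕ) (α : ℝ) (g : EuclideanSpace ℝ (Fin d) → ℝ)
    (x : EuclideanSpace ℝ (Fin d)) : ℝ≥0∞ :=
  ⨆ (ρ : ℝ) (_ : 0 < ρ),
    ENNReal.ofReal (ρ ^ α) * (volume (ball x ρ))⁻¹ *
      ∫⁻ z in ball x ρ, ENNReal.ofReal |g z|

/-- The cut-off fractional maximal function
`M_α^ρ g (x) = sup_{0<r<ρ} r^α ⨍_{B_r(x)} |g|`. -/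
noncomputable def cutFracMax (d : ℕ) (α ρ : ℝ) (g : EuclideanSpace ℝ (Fin d) → ℝ)
    (x : EuclideanSpace ℝ (Fin d)) : ℝ≥0∞ :=
  ⨆ (r : ℝ) (_ : 0 < r) (_ : r < ρ),
    ENNReal.ofReal (r ^ α) * (volume (ball x r))⁻¹ *
      ∫⁻ z in ball x r, ENNReal.ofReal |g z|

/-- If `M_α U (x₁) ≤ λ` for some `x₁ ∈ B_ρ(x₀)`, then for every `a > 3^d`,
`|B_ρ(x₀) ∩ {M_α U > aλ}| ≤ |B_ρ(x₀) ∩ {M_α^ρ (χ_{B_{2ρ}(x₀)} U) > aλ}|`. -/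
theorem level_set_localization (d : ℕ) (hd : 1 ≤ d) (α : ℝ) (hα0 : 0 ≤ α) (hαd : α < d)
    (U : EuclideanSpace ℝ (Fin d) → ℝ) (hU0 : ∀ x, 0 ≤ U x)
    (hUloc : LocallyIntegrable U volume)
    (x₀ : EuclideanSpace ℝ (Fin d)) (ρ lam : ℝ) (hρ : 0 < ρ) (hlam : 0 < lam)
    (x₁ : EuclideanSpace ℝ (Fin d)) (hx₁ : x₁ ∈ ball x₀ ρ)
    (hx₁M : fracMax d α U x₁ ≤ ENNReal.ofReal lam)
    (a : ℝ) (ha : (3 : ℝ) ^ d < a) :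
    volume (ball x₀ ρ ∩ {x | ENNReal.ofReal (a * lam) < fracMax d α U x}) ≤
      volume (ball x₀ ρ ∩
        {x | ENNReal.ofReal (a * lam) <
          cutFracMax d α ρ ((ball x₀ (2 * ρ)).indicator U) x}) := by
  apply measure_mono
  rintro x ⟨hxball, hx⟩
  refine ⟨hxball, ?_⟩
  simp only [Set.mem_setOf_eq] at hx ⊢
  rw [fracMax, lt_iSup_iff] at hx
  obtain ⟨r, hr⟩ := hx
  rw [lt_iSup_iff] at hr
  obtain ⟨hr0, hr⟩ := hr
  -- key bound for radii ≥ ρ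
  have key : ∀ s : ℝ, ρ ≤ s →
      ENNReal.ofReal (s ^ α) * (volume (ball x s))⁻¹ *
        ∫⁻ z in ball x s, ENNReal.ofReal |U z| ≤ ENNReal.ofReal (3 ^ d * lam) := by
    intro s hs
    have hs0 : 0 < s := hρ.trans_le hs
    have hsub : ball x s ⊆ ball x₁ (3 * s) := by
      intro z hz
      have h1 : dist z x < s := mem_ball.1 hz
      have h2 : dist x x₀ < ρ := mem_ball.1 hxball
      have h3 : dist x₀ x₁ < ρ := mem_ball'.1 hx₁
      have := (dist_triangle z x x₁).trans_lt
        (by nlinarith [dist_triangle x x₀ x₁] : dist z x + dist x x₁ < 3 * s)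
      exact mem_ball.2 this
    have hvol : volume (ball x₁ (3 * s)) =
        ENNReal.ofReal ((3 : ℝ) ^ d) * volume (ball x s) := by
      rw [Measure.addHaar_ball_mul_of_pos volume x₁ (by norm_num : (0:ℝ) < 3) s,
        finrank_euclideanSpace_fin]
      congr 1
      exact (Measure.addHaar_ball_center volume x s).symm
    have h3d0 : ENNReal.ofReal ((3 : ℝ) ^ d) ≠ 0 := by
      simp [ENNReal.ofReal_eq_zero, not_le]
    have h3dtop : ENNReal.ofReal ((3 : ℝ) ^ d) ≠ ⊤ := ENNReal.ofReal_ne_top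
    have hpow : ENNReal.ofReal (s ^ α) ≤ ENNReal.ofReal ((3 * s) ^ α) := by
      apply ENNReal.ofReal_le_ofReal
      apply Real.rpow_le_rpow hs0.le (by linarith) hα0
    calc ENNReal.ofReal (s ^ α) * (volume (ball x s))⁻¹ *
          ∫⁻ z in ball x s, ENNReal.ofReal |U z|
        ≤ ENNReal.ofReal ((3 * s) ^ α) * (volume (ball x s))⁻¹ *
          ∫⁻ z in ball x₁ (3 * s), ENNReal.ofReal |U z| := by
          gcongr
      _ = ENNReal.ofReal ((3 : ℝ) ^ d) *
          (ENNReal.ofReal ((3 * s) ^ α) * (volume (ball x₁ (3 * s)))⁻¹ *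
            ∫⁻ z in ball x₁ (3 * s), ENNReal.ofReal |U z|) := by
          rw [hvol, ENNReal.mul_inv (Or.inl h3d0) (Or.inl h3dtop),
            show ∀ c ci A v I : ℝ≥0∞, c * (A * (ci * v) * I) = (c * ci) * (A * v * I)
              from fun _ _ _ _ _ => by ring,
            ENNReal.mul_inv_cancel h3d0 h3dtop, one_mul]
      _ ≤ ENNReal.ofReal ((3 : ℝ) ^ d) * ENNReal.ofReal lam := by
          gcongr
          refine le_trans ?_ hx₁M
          rw [fracMax]
          have h3s : 0 < 3 * s := by linarith
          exact le_iSup_of_le (3 * s) (le_iSup_of_le h3s le_rfl)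
      _ = ENNReal.ofReal (3 ^ d * lam) := by
          rw [← ENNReal.ofReal_mul (by positivity)]
  have hle : ENNReal.ofReal (3 ^ d * lam) ≤ ENNReal.ofReal (a * lam) := by
    apply ENNReal.ofReal_le_ofReal
    nlinarith
  have hrρ : r < ρ := by
    by_contra h
    push_neg at h
    exact absurd (hr.trans_le ((key r h).trans hle)) (lt_irrefl _)
  -- now conclude
  have heq : (∫⁻ z in ball x r, ENNReal.ofReal |(ball x₀ (2 * ρ)).indicator U z|) =
      ∫⁻ z in ball x r, ENNReal.ofReal |U z| := by
    apply setLIntegral_congr_fun measurableSet_ball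
    intro z hz
    have : z ∈ ball x₀ (2 * ρ) := by
      have h1 : dist z x < r := mem_ball.1 hz
      have h2 : dist x x₀ < ρ := mem_ball.1 hxball
      have := (dist_triangle z x x₀).trans_lt (by linarith : dist z x + dist x x₀ < 2 * ρ)
      exact mem_ball.2 this
    simp only [Set.indicator_of_mem this]
  calc ENNReal.ofReal (a * lam)
      < ENNReal.ofReal (r ^ α) * (volume (ball x r))⁻¹ *
        ∫⁻ z in ball x r, ENNReal.ofReal |U z| := hr
    _ = ENNReal.ofReal (r ^ α) * (volume (ball x r))⁻¹ *
        ∫⁻ z in ball x r, ENNReal.ofReal |(ball x₀ (2 * ρ)).indicator U z| := by rw [heq]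
    _ ≤ cutFracMax d α ρ ((ball x₀ (2 * ρ)).indicator U) x := by
        rw [cutFracMax]
        exact le_iSup_of_le r (le_iSup_of_le hr0 (le_iSup_of_le hrρ le_rfl))
end

section
/- Let β₂ > β₁ > 1 and let Ψ : [0, ∞) → [0, ∞) be nondecreasing with β₁ Ψ(λ) ≤ Ψ(2λ) ≤ β₂ Ψ(λ) for all λ ≥ 0. Let 0 < s < ∞, 0 < t < ∞, a, b > 0 and C* ≥ 1. Then there exists ε₀ > 0, depending only on s, t, β₁, β₂, a and C*, with the following property: if X, Y : (0, ∞) → [0, ∞) are measurable functions such that ∫₀^∞ λ^{t−1} [Ψ(X(λ))]^{t/s} dλ < ∞ and such that for some ε ∈ (0, ε₀] one has X(aλ) ≤ C* (ε X(λ) + Y(bλ)) for all λ > 0, then ( ∫₀^∞ λ^{t−1} [Ψ(X(λ))]^{t/s} dλ )^{1/t} ≤ C ( ∫₀^∞ λ^{t−1} [Ψ(Y(λ))]^{t/s} dλ )^{1/t}, where C depends only on s, t, β₁, β₂, a, b and C*. -/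
open MeasureTheory
open scoped ENNReal

lemma rpow_add_le_aux (u v p : ℝ) (hu : 0 ≤ u) (hv : 0 ≤ v) (hp : 0 ≤ p) :
    (u + v) ^ p ≤ 2 ^ p * (u ^ p + v ^ p) := by
  have h1 : u + v ≤ 2 * max u v := by
    rcases le_total u v with h | h
    · rw [max_eq_right h]; linarith
    · rw [max_eq_left h]; linarith
  have h2 : (u + v) ^ p ≤ (2 * max u v) ^ p :=
    Real.rpow_le_rpow (by positivity) h1 hp
  have h3 : (2 * max u v) ^ p = 2 ^ p * (max u v) ^ p :=
    Real.mul_rpow (by norm_num) (le_max_of_le_left hu)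
  have h4 : (max u v) ^ p ≤ u ^ p + v ^ p := by
    rcases le_total u v with h | h
    · rw [max_eq_right h]; nlinarith [Real.rpow_nonneg hu p]
    · rw [max_eq_left h]; nlinarith [Real.rpow_nonneg hv p]
  calc (u + v) ^ p ≤ (2 * max u v) ^ p := h2
    _ = 2 ^ p * (max u v) ^ p := h3
    _ ≤ 2 ^ p * (u ^ p + v ^ p) := by
        have : (0:ℝ) ≤ 2 ^ p := Real.rpow_nonneg (by norm_num) p
        nlinarith

lemma cov_aux (t c : ℝ) (hc : 0 < c) (F : ℝ → ℝ) :
    (∫⁻ lam in Set.Ioi (0 : ℝ), ENNReal.ofReal (lam ^ (t - 1) * F (c * lam))) =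
      ENNReal.ofReal (c⁻¹ * c ^ (-(t - 1))) *
        ∫⁻ lam in Set.Ioi (0 : ℝ), ENNReal.ofReal (lam ^ (t - 1) * F lam) := by
  set g : ℝ → ℝ≥0∞ := fun μ => ENNReal.ofReal (c ^ (-(t - 1)) * (μ ^ (t - 1) * F μ)) with hg
  have hemb : MeasurableEmbedding (fun lam : ℝ => c * lam) := measurableEmbedding_mulLeft₀ hc.ne'
  have hpre : (fun lam : ℝ => c * lam) ⁻¹' (Set.Ioi 0) = Set.Ioi 0 := by
    ext x
    simp only [Set.mem_preimage, Set.mem_Ioi]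
    constructor <;> intro h <;> nlinarith
  have hmap : Measure.map (fun lam : ℝ => c * lam) (volume.restrict (Set.Ioi 0)) =
      ENNReal.ofReal c⁻¹ • volume.restrict (Set.Ioi 0) := by
    calc Measure.map (fun lam : ℝ => c * lam) (volume.restrict (Set.Ioi 0))
        = Measure.map (fun lam : ℝ => c * lam)
            (volume.restrict ((fun lam : ℝ => c * lam) ⁻¹' (Set.Ioi 0))) := by rw [hpre]
      _ = (Measure.map (fun lam : ℝ => c * lam) volume).restrict (Set.Ioi 0) :=
          (Measure.restrict_map hemb.measurable measurableSet_Ioi).symm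
      _ = (ENNReal.ofReal |c⁻¹| • volume).restrict (Set.Ioi 0) := by
          rw [Real.map_volume_mul_left hc.ne']
      _ = ENNReal.ofReal c⁻¹ • volume.restrict (Set.Ioi 0) := by
          rw [Measure.restrict_smul, abs_of_pos (inv_pos.2 hc)]
  have h1 : (∫⁻ lam in Set.Ioi (0 : ℝ), ENNReal.ofReal (lam ^ (t - 1) * F (c * lam))) =
      ∫⁻ lam in Set.Ioi (0 : ℝ), g (c * lam) := by
    apply setLIntegral_congr_fun measurableSet_Ioi
    intro lam hlam
    have hlam0 : (0:ℝ) < lam := hlam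
    rw [hg]
    beta_reduce
    congr 1
    rw [Real.mul_rpow hc.le hlam0.le, Real.rpow_neg hc.le]
    have hcpow : (0:ℝ) < c ^ (t - 1) := Real.rpow_pos_of_pos hc _
    field_simp
  have h2 : (∫⁻ lam in Set.Ioi (0 : ℝ), g (c * lam)) =
      ENNReal.ofReal c⁻¹ * ∫⁻ μ in Set.Ioi (0 : ℝ), g μ := by
    rw [← hemb.lintegral_map g, hmap, lintegral_smul_measure, smul_eq_mul]
  have h3 : (∫⁻ μ in Set.Ioi (0 : ℝ), g μ) =
      ENNReal.ofReal (c ^ (-(t - 1))) *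
        ∫⁻ μ in Set.Ioi (0 : ℝ), ENNReal.ofReal (μ ^ (t - 1) * F μ) := by
    simp_rw [hg, ENNReal.ofReal_mul (Real.rpow_nonneg hc.le _)]
    exact lintegral_const_mul' _ _ ENNReal.ofReal_ne_top
  rw [h1, h2, h3, ENNReal.ofReal_mul (inv_nonneg.2 hc.le), mul_assoc]

/-- Abstract absorption in generalized Lorentz-type functionals: if
`Ψ : [0,∞) → [0,∞)` is nondecreasing with `β₁ Ψ(λ) ≤ Ψ(2λ) ≤ β₂ Ψ(λ)` for some
`β₂ > β₁ > 1`, and `0 < s, t < ∞`, `a, b > 0`, `C* ≥ 1`, then there are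
`ε₀ > 0` and `C > 0` (depending only on the displayed parameters) such that:
whenever `X, Y : (0,∞) → [0,∞)` are measurable, the `X`-functional is finite,
and the level-set inequality `X(aλ) ≤ C*(ε X(λ) + Y(bλ))` holds for all `λ > 0`
and some `ε ∈ (0, ε₀]`, then
`(∫₀^∞ λ^{t−1} Ψ(X(λ))^{t/s} dλ)^{1/t} ≤ C (∫₀^∞ λ^{t−1} Ψ(Y(λ))^{t/s} dλ)^{1/t}`. -/
theorem lorentz_absorption (β₁ β₂ : ℝ) (hβ₁ : 1 < β₁) (hβ₁₂ : β₁ < β₂)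
    (Ψ : ℝ → ℝ) (hΨ0 : ∀ x, 0 ≤ x → 0 ≤ Ψ x) (hmono : MonotoneOn Ψ (Set.Ici 0))
    (hlow : ∀ lam, 0 ≤ lam → β₁ * Ψ lam ≤ Ψ (2 * lam))
    (hupp : ∀ lam, 0 ≤ lam → Ψ (2 * lam) ≤ β₂ * Ψ lam)
    (s t a b Cstar : ℝ) (hs : 0 < s) (ht : 0 < t) (ha : 0 < a) (hb : 0 < b)
    (hC : 1 ≤ Cstar) :
    ∃ ε₀ : ℝ, 0 < ε₀ ∧ ∃ C : ℝ, 0 < C ∧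
      ∀ X Y : ℝ → ℝ, Measurable X → Measurable Y →
        (∀ lam, 0 < lam → 0 ≤ X lam) → (∀ lam, 0 < lam → 0 ≤ Y lam) →
        (∫⁻ lam in Set.Ioi (0 : ℝ),
            ENNReal.ofReal (lam ^ (t - 1) * Ψ (X lam) ^ (t / s))) ≠ ⊤ →
        ∀ ε : ℝ, 0 < ε → ε ≤ ε₀ →
          (∀ lam, 0 < lam → X (a * lam) ≤ Cstar * (ε * X lam + Y (b * lam))) →
          (∫⁻ lam in Set.Ioi (0 : ℝ),
              ENNReal.ofReal (lam ^ (t - 1) * Ψ (X lam) ^ (t / s))) ^ (1 / t) ≤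
            ENNReal.ofReal C *
              (∫⁻ lam in Set.Ioi (0 : ℝ),
                ENNReal.ofReal (lam ^ (t - 1) * Ψ (Y lam) ^ (t / s))) ^ (1 / t) := by
  have hβ₁0 : (0:ℝ) < β₁ := lt_trans one_pos hβ₁
  have hβ₂1 : (1:ℝ) < β₂ := hβ₁.trans hβ₁₂
  have hβ₂0 : (0:ℝ) < β₂ := lt_trans one_pos hβ₂1
  set p := t / s with hp_def
  have hp : 0 < p := div_pos ht hs
  -- iterated doubling
  have hlow' : ∀ (k : ℕ) (x : ℝ), 0 ≤ x → β₁ ^ k * Ψ x ≤ Ψ (2 ^ k * x) := by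
    intro k
    induction k with
    | zero => intro x hx; simp
    | succ k ih =>
      intro x hx
      have h1 := ih x hx
      have h2 := hlow (2 ^ k * x) (by positivity)
      have h3 : β₁ * (β₁ ^ k * Ψ x) ≤ β₁ * Ψ (2 ^ k * x) :=
        mul_le_mul_of_nonneg_left h1 hβ₁0.le
      have h4 : Ψ (2 * (2 ^ k * x)) = Ψ (2 ^ (k + 1) * x) := by
        congr 1; ring
      calc β₁ ^ (k + 1) * Ψ x = β₁ * (β₁ ^ k * Ψ x) := by ring
        _ ≤ β₁ * Ψ (2 ^ k * x) := h3
        _ ≤ Ψ (2 * (2 ^ k * x)) := h2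
        _ = Ψ (2 ^ (k + 1) * x) := h4
  have hupp' : ∀ (k : ℕ) (x : ℝ), 0 ≤ x → Ψ (2 ^ k * x) ≤ β₂ ^ k * Ψ x := by
    intro k
    induction k with
    | zero => intro x hx; simp
    | succ k ih =>
      intro x hx
      have h4 : Ψ (2 ^ (k + 1) * x) = Ψ (2 * (2 ^ k * x)) := by congr 1; ring
      calc Ψ (2 ^ (k + 1) * x) = Ψ (2 * (2 ^ k * x)) := h4
        _ ≤ β₂ * Ψ (2 ^ k * x) := hupp _ (by positivity)
        _ ≤ β₂ * (β₂ ^ k * Ψ x) := mul_le_mul_of_nonneg_left (ih x hx) hβ₂0.le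
        _ = β₂ ^ (k + 1) * Ψ x := by ring
  -- choose n with Cstar < 2 ^ n
  obtain ⟨n, hn⟩ := pow_unbounded_of_one_lt Cstar (one_lt_two : (1:ℝ) < 2)
  have hK : ∀ w : ℝ, 0 ≤ w → Ψ (Cstar * w) ≤ β₂ ^ n * Ψ w := by
    intro w hw
    have h1 : Ψ (Cstar * w) ≤ Ψ (2 ^ n * w) := by
      apply hmono (Set.mem_Ici.2 (by positivity)) (Set.mem_Ici.2 (by positivity))
      exact mul_le_mul_of_nonneg_right hn.le hw
    exact h1.trans (hupp' n w hw)
  have hadd : ∀ u v : ℝ, 0 ≤ u → 0 ≤ v → Ψ (u + v) ≤ β₂ * (Ψ u + Ψ v) := by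
    intro u v hu hv
    have h1 : u + v ≤ 2 * max u v := by
      rcases le_total u v with h | h
      · rw [max_eq_right h]; linarith
      · rw [max_eq_left h]; linarith
    have h2 : Ψ (u + v) ≤ Ψ (2 * max u v) :=
      hmono (Set.mem_Ici.2 (by positivity)) (Set.mem_Ici.2 (by positivity)) h1
    have h3 : Ψ (2 * max u v) ≤ β₂ * Ψ (max u v) := hupp _ (by positivity)
    have h4 : Ψ (max u v) ≤ Ψ u + Ψ v := by
      rcases le_total u v with h | h
      · rw [max_eq_right h]; nlinarith [hΨ0 u hu]
      · rw [max_eq_left h]; nlinarith [hΨ0 v hv]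
    nlinarith [hΨ0 (max u v) (by positivity : (0:ℝ) ≤ max u v)]
  -- key real constants
  set A : ℝ := a⁻¹ * a ^ (-(t - 1)) with hA_def
  have hA : 0 < A := by
    have := Real.rpow_pos_of_pos ha (-(t - 1)); positivity
  set D : ℝ := (2 * β₂ ^ (n + 1)) ^ p with hD_def
  have hD : 0 < D := Real.rpow_pos_of_pos (by positivity) p
  -- choose m with absorption
  have hδ : 0 < min 1 ((A / (2 * D)) ^ p⁻¹) := by
    apply lt_min one_pos
    exact Real.rpow_pos_of_pos (by positivity) _
  obtain ⟨m, hm⟩ := exists_pow_lt_of_lt_one hδ (by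
    rw [inv_lt_one_iff₀]; right; exact hβ₁ : β₁⁻¹ < 1)
  set E : ℝ := β₁⁻¹ ^ m with hE_def
  have hE0 : 0 < E := by positivity
  have hEp : D * E ^ p ≤ A / 2 := by
    have h1 : E ^ p ≤ (min 1 ((A / (2 * D)) ^ p⁻¹)) ^ p :=
      Real.rpow_le_rpow hE0.le hm.le hp.le
    have h2 : (min 1 ((A / (2 * D)) ^ p⁻¹)) ^ p ≤ ((A / (2 * D)) ^ p⁻¹) ^ p :=
      Real.rpow_le_rpow (le_of_lt hδ) (min_le_right _ _) hp.le
    have h3 : ((A / (2 * D)) ^ p⁻¹) ^ p = A / (2 * D) :=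
      Real.rpow_inv_rpow (by positivity) hp.ne'
    have h4 : E ^ p ≤ A / (2 * D) := by
      calc E ^ p ≤ _ := h1
        _ ≤ _ := h2
        _ = _ := h3
    calc D * E ^ p ≤ D * (A / (2 * D)) := mul_le_mul_of_nonneg_left h4 hD.le
      _ = A / 2 := by field_simp
  -- absorption of small factor through Ψ
  refine ⟨(2:ℝ)⁻¹ ^ m, by positivity, ?_⟩
  have habs : ∀ u : ℝ, 0 ≤ u → ∀ ε : ℝ, 0 < ε → ε ≤ (2:ℝ)⁻¹ ^ m →
      Ψ (ε * u) ≤ E * Ψ u := by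
    intro u hu ε hε hεm
    have h1 : β₁ ^ m * Ψ (ε * u) ≤ Ψ (2 ^ m * (ε * u)) := hlow' m _ (by positivity)
    have h2 : (2:ℝ) ^ m * (ε * u) ≤ u := by
      have h21 : (2:ℝ) ^ m * ε ≤ (2:ℝ) ^ m * (2:ℝ)⁻¹ ^ m :=
        mul_le_mul_of_nonneg_left hεm (by positivity)
      have h22 : (2:ℝ) ^ m * (2:ℝ)⁻¹ ^ m = 1 := by
        rw [← mul_pow]; norm_num
      have h23 : (2:ℝ) ^ m * ε ≤ 1 := h22 ▸ h21
      calc (2:ℝ) ^ m * (ε * u) = ((2:ℝ) ^ m * ε) * u := by ring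
        _ ≤ 1 * u := mul_le_mul_of_nonneg_right h23 hu
        _ = u := one_mul u
    have h3 : Ψ (2 ^ m * (ε * u)) ≤ Ψ u :=
      hmono (Set.mem_Ici.2 (by positivity)) (Set.mem_Ici.2 hu) h2
    have h4 : β₁ ^ m * Ψ (ε * u) ≤ Ψ u := h1.trans h3
    have h5 : (0:ℝ) < β₁ ^ m := by positivity
    rw [hE_def, inv_pow]
    have h6 := mul_le_mul_of_nonneg_left h4 (inv_nonneg.2 h5.le)
    rwa [← mul_assoc, inv_mul_cancel₀ h5.ne', one_mul] at h6
  -- ENNReal constants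
  set Ka : ℝ≥0∞ := ENNReal.ofReal A with hKa_def
  set Kb : ℝ≥0∞ := ENNReal.ofReal (b⁻¹ * b ^ (-(t - 1))) with hKb_def
  have hKa0 : Ka ≠ 0 := by
    rw [hKa_def]; exact (ENNReal.ofReal_pos.2 hA).ne'
  have hKaT : Ka ≠ ⊤ := ENNReal.ofReal_ne_top
  have hKb0 : Kb ≠ 0 := by
    have : (0:ℝ) < b⁻¹ * b ^ (-(t - 1)) := by
      have := Real.rpow_pos_of_pos hb (-(t - 1)); positivity
    rw [hKb_def]; exact (ENNReal.ofReal_pos.2 this).ne'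
  set c₀ : ℝ≥0∞ := ((Ka / 2)⁻¹ * (ENNReal.ofReal D * Kb)) ^ (1 / t) with hc₀_def
  have hKahalf0 : Ka / 2 ≠ 0 := by
    simp only [ne_eq, ENNReal.div_eq_zero_iff]
    push_neg
    exact ⟨hKa0, by norm_num⟩
  have hKahalfT : Ka / 2 ≠ ⊤ :=
    (ENNReal.div_lt_top hKaT (by norm_num)).ne
  have hc₀T : c₀ ≠ ⊤ := by
    apply ENNReal.rpow_ne_top_of_nonneg (by positivity)
    exact ENNReal.mul_ne_top (ENNReal.inv_ne_top.2 hKahalf0)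
      (ENNReal.mul_ne_top ENNReal.ofReal_ne_top ENNReal.ofReal_ne_top)
  refine ⟨c₀.toReal + 1, by positivity, ?_⟩
  intro X Y hX hY hX0 hY0 hfin ε hε hεε₀ hineq
  -- extended monotone Ψ'
  set Ψ' : ℝ → ℝ := fun x => Ψ (max x 0) with hΨ'_def
  have hΨ'mono : Monotone Ψ' := fun x y hxy =>
    hmono (Set.mem_Ici.2 (le_max_right x 0)) (Set.mem_Ici.2 (le_max_right y 0))
      (max_le_max hxy le_rfl)
  have hΨ'meas : Measurable Ψ' := hΨ'mono.measurable
  have hΨ'eq : ∀ x : ℝ, 0 ≤ x → Ψ' x = Ψ x := by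
    intro x hx; rw [hΨ'_def]; simp [max_eq_left hx]
  -- the functionals
  set IX : ℝ≥0∞ := ∫⁻ lam in Set.Ioi (0 : ℝ),
      ENNReal.ofReal (lam ^ (t - 1) * Ψ' (X lam) ^ p) with hIX_def
  set IY : ℝ≥0∞ := ∫⁻ lam in Set.Ioi (0 : ℝ),
      ENNReal.ofReal (lam ^ (t - 1) * Ψ' (Y lam) ^ p) with hIY_def
  have hIXeq : (∫⁻ lam in Set.Ioi (0 : ℝ),
      ENNReal.ofReal (lam ^ (t - 1) * Ψ (X lam) ^ (t / s))) = IX := by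
    apply setLIntegral_congr_fun measurableSet_Ioi
    intro lam hlam
    beta_reduce
    rw [hΨ'eq _ (hX0 lam hlam)]
  have hIYeq : (∫⁻ lam in Set.Ioi (0 : ℝ),
      ENNReal.ofReal (lam ^ (t - 1) * Ψ (Y lam) ^ (t / s))) = IY := by
    apply setLIntegral_congr_fun measurableSet_Ioi
    intro lam hlam
    beta_reduce
    rw [hΨ'eq _ (hY0 lam hlam)]
  have hIXfin : IX ≠ ⊤ := hIXeq ▸ hfin
  -- pointwise estimate
  have hpt : ∀ lam : ℝ, 0 < lam →
      Ψ' (X (a * lam)) ≤ β₂ ^ (n + 1) * (E * Ψ' (X lam) + Ψ' (Y (b * lam))) := by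
    intro lam hlam
    have hXa : 0 ≤ X (a * lam) := hX0 _ (by positivity)
    have hXl : 0 ≤ X lam := hX0 _ hlam
    have hYb : 0 ≤ Y (b * lam) := hY0 _ (by positivity)
    have harg : 0 ≤ ε * X lam + Y (b * lam) := by positivity
    have h1 : Ψ (X (a * lam)) ≤ Ψ (Cstar * (ε * X lam + Y (b * lam))) :=
      hmono (Set.mem_Ici.2 hXa) (Set.mem_Ici.2 (by positivity)) (hineq lam hlam)
    have h2 : Ψ (Cstar * (ε * X lam + Y (b * lam))) ≤
        β₂ ^ n * Ψ (ε * X lam + Y (b * lam)) := hK _ harg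
    have h3 : Ψ (ε * X lam + Y (b * lam)) ≤
        β₂ * (Ψ (ε * X lam) + Ψ (Y (b * lam))) := hadd _ _ (by positivity) hYb
    have h4 : Ψ (ε * X lam) ≤ E * Ψ (X lam) := habs _ hXl ε hε hεε₀
    have hpow : (0:ℝ) < β₂ ^ n := by positivity
    rw [hΨ'eq _ hXa, hΨ'eq _ hXl, hΨ'eq _ hYb]
    have h5 : Ψ (ε * X lam) + Ψ (Y (b * lam)) ≤ E * Ψ (X lam) + Ψ (Y (b * lam)) :=
      add_le_add_left h4 _
    have h6 : β₂ * (Ψ (ε * X lam) + Ψ (Y (b * lam))) ≤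
        β₂ * (E * Ψ (X lam) + Ψ (Y (b * lam))) :=
      mul_le_mul_of_nonneg_left h5 hβ₂0.le
    calc Ψ (X (a * lam)) ≤ β₂ ^ n * Ψ (ε * X lam + Y (b * lam)) := h1.trans h2
      _ ≤ β₂ ^ n * (β₂ * (Ψ (ε * X lam) + Ψ (Y (b * lam)))) :=
          mul_le_mul_of_nonneg_left h3 hpow.le
      _ ≤ β₂ ^ n * (β₂ * (E * Ψ (X lam) + Ψ (Y (b * lam)))) :=
          mul_le_mul_of_nonneg_left h6 hpow.le
      _ = β₂ ^ (n + 1) * (E * Ψ (X lam) + Ψ (Y (b * lam))) := by ring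
  -- pointwise rpow estimate as ENNReal inequality
  have hptE : ∀ lam : ℝ, lam ∈ Set.Ioi (0:ℝ) →
      ENNReal.ofReal (lam ^ (t - 1) * Ψ' (X (a * lam)) ^ p) ≤
        ENNReal.ofReal (D * E ^ p * (lam ^ (t - 1) * Ψ' (X lam) ^ p)) +
          ENNReal.ofReal (D * (lam ^ (t - 1) * Ψ' (Y (b * lam)) ^ p)) := by
    intro lam hlam
    have hlam0 : (0:ℝ) < lam := hlam
    have hXa : 0 ≤ X (a * lam) := hX0 _ (by positivity)
    have hXl : 0 ≤ X lam := hX0 _ hlam0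
    have hYb : 0 ≤ Y (b * lam) := hY0 _ (by positivity)
    have hΨXa : 0 ≤ Ψ' (X (a * lam)) := by rw [hΨ'eq _ hXa]; exact hΨ0 _ hXa
    have hΨXl : 0 ≤ Ψ' (X lam) := by rw [hΨ'eq _ hXl]; exact hΨ0 _ hXl
    have hΨYb : 0 ≤ Ψ' (Y (b * lam)) := by rw [hΨ'eq _ hYb]; exact hΨ0 _ hYb
    set u : ℝ := E * Ψ' (X lam) with hu_def
    set v : ℝ := Ψ' (Y (b * lam)) with hv_def
    have hu : 0 ≤ u := by positivity
    have hv : 0 ≤ v := hΨYb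
    have h1 : Ψ' (X (a * lam)) ^ p ≤ (β₂ ^ (n + 1) * (u + v)) ^ p :=
      Real.rpow_le_rpow hΨXa (hpt lam hlam0) hp.le
    have h2 : (β₂ ^ (n + 1) * (u + v)) ^ p =
        (β₂ ^ (n + 1)) ^ p * (u + v) ^ p :=
      Real.mul_rpow (by positivity) (by positivity)
    have h3 : (u + v) ^ p ≤ 2 ^ p * (u ^ p + v ^ p) :=
      rpow_add_le_aux u v p hu hv hp.le
    have h4 : (β₂ ^ (n + 1)) ^ p * (2 ^ p * (u ^ p + v ^ p)) = D * (u ^ p + v ^ p) := by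
      have h41 : (2 * β₂ ^ (n + 1) : ℝ) ^ p = 2 ^ p * (β₂ ^ (n + 1)) ^ p :=
        Real.mul_rpow (by norm_num) (by positivity)
      rw [hD_def, h41]; ring
    have h5 : u ^ p = E ^ p * Ψ' (X lam) ^ p := Real.mul_rpow hE0.le hΨXl
    have hb2 : (0:ℝ) ≤ (β₂ ^ (n + 1)) ^ p := Real.rpow_nonneg (by positivity) p
    have h6 : Ψ' (X (a * lam)) ^ p ≤ D * E ^ p * Ψ' (X lam) ^ p + D * v ^ p := by
      calc Ψ' (X (a * lam)) ^ p ≤ (β₂ ^ (n + 1)) ^ p * (u + v) ^ p := h1.trans_eq h2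
        _ ≤ (β₂ ^ (n + 1)) ^ p * (2 ^ p * (u ^ p + v ^ p)) :=
            mul_le_mul_of_nonneg_left h3 hb2
        _ = D * (u ^ p + v ^ p) := h4
        _ = D * E ^ p * Ψ' (X lam) ^ p + D * v ^ p := by rw [h5]; ring
    have h7 : lam ^ (t - 1) * Ψ' (X (a * lam)) ^ p ≤
        D * E ^ p * (lam ^ (t - 1) * Ψ' (X lam) ^ p) +
          D * (lam ^ (t - 1) * Ψ' (Y (b * lam)) ^ p) := by
      have hlt : (0:ℝ) ≤ lam ^ (t - 1) := Real.rpow_nonneg hlam0.le _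
      calc lam ^ (t - 1) * Ψ' (X (a * lam)) ^ p
          ≤ lam ^ (t - 1) * (D * E ^ p * Ψ' (X lam) ^ p + D * v ^ p) :=
            mul_le_mul_of_nonneg_left h6 hlt
        _ = D * E ^ p * (lam ^ (t - 1) * Ψ' (X lam) ^ p) +
            D * (lam ^ (t - 1) * Ψ' (Y (b * lam)) ^ p) := by rw [hv_def]; ring
    calc ENNReal.ofReal (lam ^ (t - 1) * Ψ' (X (a * lam)) ^ p)
        ≤ ENNReal.ofReal (D * E ^ p * (lam ^ (t - 1) * Ψ' (X lam) ^ p) +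
            D * (lam ^ (t - 1) * Ψ' (Y (b * lam)) ^ p)) := ENNReal.ofReal_le_ofReal h7
      _ ≤ _ := ENNReal.ofReal_add_le
  -- integrate
  have hcovX : (∫⁻ lam in Set.Ioi (0 : ℝ),
      ENNReal.ofReal (lam ^ (t - 1) * Ψ' (X (a * lam)) ^ p)) = Ka * IX :=
    cov_aux t a ha (fun μ => Ψ' (X μ) ^ p)
  have hcovY : (∫⁻ lam in Set.Ioi (0 : ℝ),
      ENNReal.ofReal (lam ^ (t - 1) * Ψ' (Y (b * lam)) ^ p)) = Kb * IY :=
    cov_aux t b hb (fun μ => Ψ' (Y μ) ^ p)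
  have hmeas1 : Measurable fun lam : ℝ =>
      ENNReal.ofReal (D * E ^ p * (lam ^ (t - 1) * Ψ' (X lam) ^ p)) := by
    have hXc : Measurable fun lam : ℝ => Ψ' (X lam) := hΨ'meas.comp hX
    fun_prop
  have hmain : Ka * IX ≤ ENNReal.ofReal (D * E ^ p) * IX +
      ENNReal.ofReal D * (Kb * IY) := by
    rw [← hcovX, ← hcovY]
    calc (∫⁻ lam in Set.Ioi (0 : ℝ),
          ENNReal.ofReal (lam ^ (t - 1) * Ψ' (X (a * lam)) ^ p))
        ≤ ∫⁻ lam in Set.Ioi (0 : ℝ),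
            (ENNReal.ofReal (D * E ^ p * (lam ^ (t - 1) * Ψ' (X lam) ^ p)) +
              ENNReal.ofReal (D * (lam ^ (t - 1) * Ψ' (Y (b * lam)) ^ p))) := by
          apply lintegral_mono_ae
          rw [ae_restrict_iff' measurableSet_Ioi]
          exact ae_of_all _ hptE
      _ = (∫⁻ lam in Set.Ioi (0 : ℝ),
            ENNReal.ofReal (D * E ^ p * (lam ^ (t - 1) * Ψ' (X lam) ^ p))) +
          ∫⁻ lam in Set.Ioi (0 : ℝ),
            ENNReal.ofReal (D * (lam ^ (t - 1) * Ψ' (Y (b * lam)) ^ p)) :=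
          lintegral_add_left hmeas1 _
      _ = ENNReal.ofReal (D * E ^ p) * IX +
          ENNReal.ofReal D * ∫⁻ lam in Set.Ioi (0 : ℝ),
            ENNReal.ofReal (lam ^ (t - 1) * Ψ' (Y (b * lam)) ^ p) := by
          congr 1
          · simp_rw [ENNReal.ofReal_mul (by positivity : (0:ℝ) ≤ D * E ^ p)]
            exact lintegral_const_mul' _ _ ENNReal.ofReal_ne_top
          · simp_rw [ENNReal.ofReal_mul hD.le]
            exact lintegral_const_mul' _ _ ENNReal.ofReal_ne_top
  -- absorb
  have hsmall : ENNReal.ofReal (D * E ^ p) ≤ Ka / 2 := by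
    rw [hKa_def]
    calc ENNReal.ofReal (D * E ^ p) ≤ ENNReal.ofReal (A / 2) :=
          ENNReal.ofReal_le_ofReal hEp
      _ = ENNReal.ofReal A / 2 := by
          rw [ENNReal.ofReal_div_of_pos (by norm_num)]
          norm_num
  have habsorb : Ka / 2 * IX ≤ ENNReal.ofReal D * (Kb * IY) := by
    have h1 : Ka / 2 * IX + Ka / 2 * IX ≤ Ka / 2 * IX + ENNReal.ofReal D * (Kb * IY) := by
      calc Ka / 2 * IX + Ka / 2 * IX = Ka * IX := by
            rw [← add_mul, ENNReal.add_halves]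
        _ ≤ ENNReal.ofReal (D * E ^ p) * IX + ENNReal.ofReal D * (Kb * IY) := hmain
        _ ≤ Ka / 2 * IX + ENNReal.ofReal D * (Kb * IY) :=
            add_le_add_left (mul_le_mul_left hsmall IX) _
    exact (ENNReal.add_le_add_iff_left (ENNReal.mul_ne_top hKahalfT hIXfin)).1 h1
  have hIXle : IX ≤ (Ka / 2)⁻¹ * (ENNReal.ofReal D * Kb) * IY := by
    have h2 := mul_le_mul_right habsorb (Ka / 2)⁻¹
    rw [← mul_assoc, ENNReal.inv_mul_cancel hKahalf0 hKahalfT, one_mul] at h2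
    calc IX ≤ (Ka / 2)⁻¹ * (ENNReal.ofReal D * (Kb * IY)) := h2
      _ = (Ka / 2)⁻¹ * (ENNReal.ofReal D * Kb) * IY := by ring
  -- conclude with rpow
  rw [hIXeq, hIYeq]
  have hfinal : IX ^ (1 / t) ≤ c₀ * IY ^ (1 / t) := by
    calc IX ^ (1 / t) ≤ ((Ka / 2)⁻¹ * (ENNReal.ofReal D * Kb) * IY) ^ (1 / t) :=
          ENNReal.rpow_le_rpow hIXle (by positivity)
      _ = c₀ * IY ^ (1 / t) := by
          rw [hc₀_def, ENNReal.mul_rpow_of_nonneg _ _ (by positivity : (0:ℝ) ≤ 1 / t)]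
  refine hfinal.trans ?_
  gcongr
  calc c₀ = ENNReal.ofReal c₀.toReal := (ENNReal.ofReal_toReal hc₀T).symm
    _ ≤ ENNReal.ofReal (c₀.toReal + 1) := ENNReal.ofReal_le_ofReal (by linarith)
end

section
/- Let β₂ > β₁ > 1 and let Ψ : [0, ∞) → [0, ∞) be nondecreasing with β₁ Ψ(λ) ≤ Ψ(2λ) ≤ β₂ Ψ(λ) for all λ ≥ 0. Let 0 < s < ∞, a, b > 0 and C* ≥ 1. Then there exists ε₀ > 0, depending only on s, β₁, β₂, a and C*, with the following property: if X, Y : (0, ∞) → [0, ∞) are functions such that sup_{λ>0} λ [Ψ(X(λ))]^{1/s} < ∞ and such that for some ε ∈ (0, ε₀] one has X(aλ) ≤ C* (ε X(λ) + Y(bλ)) for all λ > 0, then sup_{λ>0} λ [Ψ(X(λ))]^{1/s} ≤ C sup_{λ>0} λ [Ψ(Y(λ))]^{1/s}, where C depends only on s, β₁, β₂, a, b and C*. -/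
open scoped ENNReal

/-- Abstract absorption in Marcinkiewicz-type (weak-type) functionals: if
`Ψ : [0,∞) → [0,∞)` is nondecreasing with `β₁ Ψ(λ) ≤ Ψ(2λ) ≤ β₂ Ψ(λ)` for some
`β₂ > β₁ > 1`, and `0 < s < ∞`, `a, b > 0`, `C* ≥ 1`, then there are `ε₀ > 0`
and `C > 0` such that: whenever `X, Y : (0,∞) → [0,∞)` satisfy
`sup_{λ>0} λ Ψ(X(λ))^{1/s} < ∞` and the level-set inequality
`X(aλ) ≤ C*(ε X(λ) + Y(bλ))` for all `λ > 0` and some `ε ∈ (0, ε₀]`, then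
`sup_{λ>0} λ Ψ(X(λ))^{1/s} ≤ C sup_{λ>0} λ Ψ(Y(λ))^{1/s}`. -/
theorem marcinkiewicz_absorption (β₁ β₂ : ℝ) (hβ₁ : 1 < β₁) (hβ₁₂ : β₁ < β₂)
    (Ψ : ℝ → ℝ) (hΨ0 : ∀ x, 0 ≤ x → 0 ≤ Ψ x) (hmono : MonotoneOn Ψ (Set.Ici 0))
    (hlow : ∀ lam, 0 ≤ lam → β₁ * Ψ lam ≤ Ψ (2 * lam))
    (hupp : ∀ lam, 0 ≤ lam → Ψ (2 * lam) ≤ β₂ * Ψ lam)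
    (s a b Cstar : ℝ) (hs : 0 < s) (ha : 0 < a) (hb : 0 < b) (hC : 1 ≤ Cstar) :
    ∃ ε₀ : ℝ, 0 < ε₀ ∧ ∃ C : ℝ, 0 < C ∧
      ∀ X Y : ℝ → ℝ,
        (∀ lam, 0 < lam → 0 ≤ X lam) → (∀ lam, 0 < lam → 0 ≤ Y lam) →
        (⨆ (lam : ℝ) (_ : 0 < lam),
            ENNReal.ofReal (lam * Ψ (X lam) ^ (1 / s))) ≠ ⊤ →
        ∀ ε : ℝ, 0 < ε → ε ≤ ε₀ →
          (∀ lam, 0 < lam → X (a * lam) ≤ Cstar * (ε * X lam + Y (b * lam))) →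
          (⨆ (lam : ℝ) (_ : 0 < lam),
              ENNReal.ofReal (lam * Ψ (X lam) ^ (1 / s))) ≤
            ENNReal.ofReal C *
              ⨆ (lam : ℝ) (_ : 0 < lam),
                ENNReal.ofReal (lam * Ψ (Y lam) ^ (1 / s)) := by
  have hβ₂ : (1:ℝ) < β₂ := hβ₁.trans hβ₁₂
  have hβ₁0 : (0:ℝ) < β₁ := by linarith
  have hβ₂0 : (0:ℝ) < β₂ := by linarith
  have hCpos : (0:ℝ) < Cstar := by linarith
  set t : ℝ := 1 / s with ht_def
  have ht : 0 < t := by positivity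
  -- iterated doubling estimates
  have hlowpow : ∀ n : ℕ, ∀ x : ℝ, 0 ≤ x → β₁ ^ n * Ψ x ≤ Ψ (2 ^ n * x) := by
    intro n
    induction n with
    | zero => intro x hx; simp
    | succ n ih =>
      intro x hx
      have h1 := ih x hx
      have h2 := hlow (2 ^ n * x) (by positivity)
      calc β₁ ^ (n+1) * Ψ x = β₁ * (β₁ ^ n * Ψ x) := by ring
        _ ≤ β₁ * Ψ (2 ^ n * x) := by nlinarith
        _ ≤ Ψ (2 * (2 ^ n * x)) := h2
        _ = Ψ (2 ^ (n+1) * x) := by ring_nf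
  have huppow : ∀ n : ℕ, ∀ x : ℝ, 0 ≤ x → Ψ (2 ^ n * x) ≤ β₂ ^ n * Ψ x := by
    intro n
    induction n with
    | zero => intro x hx; simp
    | succ n ih =>
      intro x hx
      have h1 := ih x hx
      calc Ψ (2 ^ (n+1) * x) = Ψ (2 * (2 ^ n * x)) := by ring_nf
        _ ≤ β₂ * Ψ (2 ^ n * x) := hupp (2 ^ n * x) (by positivity)
        _ ≤ β₂ * (β₂ ^ n * Ψ x) := by nlinarith
        _ = β₂ ^ (n+1) * Ψ x := by ring
  have hsum : ∀ u v : ℝ, 0 ≤ u → 0 ≤ v → Ψ (u + v) ≤ β₂ * (Ψ u + Ψ v) := by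
    intro u v hu hv
    have hmx : (0:ℝ) ≤ max u v := le_trans hu (le_max_left u v)
    have h1 : Ψ (u + v) ≤ Ψ (2 * max u v) := by
      apply hmono (Set.mem_Ici.2 (by linarith)) (Set.mem_Ici.2 (by linarith))
      have := le_max_left u v
      have := le_max_right u v
      linarith
    have h2 : Ψ (2 * max u v) ≤ β₂ * Ψ (max u v) := hupp _ hmx
    have h3 : Ψ (max u v) ≤ Ψ u + Ψ v := by
      rcases max_cases u v with ⟨he, _⟩ | ⟨he, _⟩ <;> rw [he]
      · linarith [hΨ0 v hv]
      · linarith [hΨ0 u hu]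
    nlinarith [hΨ0 (max u v) hmx]
  have hrpow_sum : ∀ P Q : ℝ, 0 ≤ P → 0 ≤ Q →
      (P + Q) ^ t ≤ 2 ^ t * (P ^ t + Q ^ t) := by
    intro P Q hP hQ
    have hmx : (0:ℝ) ≤ max P Q := le_trans hP (le_max_left P Q)
    have h1 : (P + Q) ^ t ≤ (2 * max P Q) ^ t := by
      apply Real.rpow_le_rpow (by linarith)
      · have := le_max_left P Q; have := le_max_right P Q; linarith
      · exact ht.le
    have h2 : (2 * max P Q) ^ t = 2 ^ t * (max P Q) ^ t :=
      Real.mul_rpow (by norm_num) hmx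
    have h3 : (max P Q) ^ t ≤ P ^ t + Q ^ t := by
      rcases max_cases P Q with ⟨he, _⟩ | ⟨he, _⟩ <;> rw [he]
      · linarith [Real.rpow_nonneg hQ t]
      · linarith [Real.rpow_nonneg hP t]
    have h4 : (0:ℝ) ≤ 2 ^ t := Real.rpow_nonneg (by norm_num) t
    calc (P + Q) ^ t ≤ 2 ^ t * (max P Q) ^ t := by rw [← h2]; exact h1
      _ ≤ 2 ^ t * (P ^ t + Q ^ t) := by nlinarith
  -- choose the exponents k and m
  have h2a : (0:ℝ) < 2 * a := by linarith
  obtain ⟨k, hk⟩ : ∃ k : ℕ, 2 * β₂ * (2 * a) ^ s < β₁ ^ k :=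
    pow_unbounded_of_one_lt _ hβ₁
  obtain ⟨m, hm⟩ : ∃ m : ℕ, Cstar < (2:ℝ) ^ m :=
    pow_unbounded_of_one_lt _ (by norm_num : (1:ℝ) < 2)
  have hb1k : (0:ℝ) < β₁ ^ k := by positivity
  set θ : ℝ := β₂ / β₁ ^ k with hθ_def
  have hθ : 0 < θ := by positivity
  set c₁ : ℝ := 2 ^ t * θ ^ t with hc₁_def
  set c₂ : ℝ := 2 ^ t * (β₂ ^ (m + 1)) ^ t with hc₂_def
  have hc₁ : 0 < c₁ := by positivity
  have hc₂ : 0 < c₂ := by positivity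
  -- the key numerical inequality : a * c₁ ≤ 1/2
  have hhalf : a * c₁ ≤ 1 / 2 := by
    have h2as : 0 < (2 * a) ^ s := Real.rpow_pos_of_pos h2a s
    have hstep : 2 * θ ≤ ((2 * a) ^ s)⁻¹ := by
      rw [hθ_def, mul_div_assoc', div_le_iff₀ hb1k]
      have h3 : ((2 * a) ^ s)⁻¹ * ((2 * a) ^ s) = 1 := inv_mul_cancel₀ h2as.ne'
      nlinarith [hk]
    have hmain : (2 * θ) ^ t ≤ (2 * a)⁻¹ := by
      calc (2 * θ) ^ t ≤ (((2 * a) ^ s)⁻¹) ^ t :=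
            Real.rpow_le_rpow (by positivity) hstep ht.le
        _ = (2 * a)⁻¹ := by
            rw [Real.inv_rpow h2as.le, ← Real.rpow_mul h2a.le]
            congr 1
            rw [ht_def, mul_one_div, div_self hs.ne', Real.rpow_one]
    have hmul : (2 * θ) ^ t = c₁ := by
      rw [hc₁_def, Real.mul_rpow (by norm_num) hθ.le]
    have h6 : a * (2 * θ) ^ t ≤ a * (2 * a)⁻¹ :=
      mul_le_mul_of_nonneg_left hmain ha.le
    have h7 : a * (2 * a)⁻¹ = 1 / 2 := by
      field_simp
    rw [← hmul]; linarith
  -- the constants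
  refine ⟨(2 ^ k : ℝ)⁻¹ / Cstar, by positivity, 2 * (a * (c₂ * b⁻¹)), by positivity,
    ?_⟩
  intro X Y hX hY hfin ε hε hεε₀ hrec
  set MX : ℝ≥0∞ := ⨆ (lam : ℝ) (_ : 0 < lam),
      ENNReal.ofReal (lam * Ψ (X lam) ^ t) with hMX_def
  set MY : ℝ≥0∞ := ⨆ (lam : ℝ) (_ : 0 < lam),
      ENNReal.ofReal (lam * Ψ (Y lam) ^ t) with hMY_def
  -- pointwise estimate for Ψ
  have hpt : ∀ lam : ℝ, 0 < lam →
      Ψ (X (a * lam)) ≤ θ * Ψ (X lam) + β₂ ^ (m + 1) * Ψ (Y (b * lam)) := by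
    intro lam hlam
    have hX0 : 0 ≤ X lam := hX _ hlam
    have hXa0 : 0 ≤ X (a * lam) := hX _ (mul_pos ha hlam)
    have hY0 : 0 ≤ Y (b * lam) := hY _ (mul_pos hb hlam)
    have hu0 : 0 ≤ Cstar * (ε * X lam) := by positivity
    have hv0 : 0 ≤ Cstar * Y (b * lam) := by positivity
    have h1 : X (a * lam) ≤ Cstar * (ε * X lam) + Cstar * Y (b * lam) := by
      have := hrec lam hlam; linarith [mul_add Cstar (ε * X lam) (Y (b * lam))]
    have h2 : Ψ (X (a * lam)) ≤ Ψ (Cstar * (ε * X lam) + Cstar * Y (b * lam)) :=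
      hmono (Set.mem_Ici.2 hXa0) (Set.mem_Ici.2 (by linarith)) h1
    have h3 := hsum _ _ hu0 hv0
    -- bound the first term
    have hcε : Cstar * ε ≤ (2 ^ k : ℝ)⁻¹ := by
      have : Cstar * ε ≤ Cstar * ((2 ^ k : ℝ)⁻¹ / Cstar) :=
        mul_le_mul_of_nonneg_left hεε₀ hCpos.le
      rw [mul_div_cancel₀ _ hCpos.ne'] at this
      exact this
    have hu1 : Cstar * (ε * X lam) ≤ (2 ^ k : ℝ)⁻¹ * X lam := by
      rw [← mul_assoc]
      exact mul_le_mul_of_nonneg_right hcε hX0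
    have h4 : Ψ (Cstar * (ε * X lam)) ≤ Ψ ((2 ^ k : ℝ)⁻¹ * X lam) :=
      hmono (Set.mem_Ici.2 hu0) (Set.mem_Ici.2 (by positivity)) hu1
    have h5 : β₁ ^ k * Ψ ((2 ^ k : ℝ)⁻¹ * X lam) ≤ Ψ (X lam) := by
      have := hlowpow k ((2 ^ k : ℝ)⁻¹ * X lam) (by positivity)
      have he : (2 : ℝ) ^ k * ((2 ^ k : ℝ)⁻¹ * X lam) = X lam := by
        rw [← mul_assoc, mul_inv_cancel₀ (by positivity), one_mul]
      rwa [he] at this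
    have h5' : Ψ ((2 ^ k : ℝ)⁻¹ * X lam) ≤ Ψ (X lam) / β₁ ^ k :=
      (le_div_iff₀ hb1k).2 (by linarith)
    -- bound the second term
    have hv1 : Cstar * Y (b * lam) ≤ (2 : ℝ) ^ m * Y (b * lam) :=
      mul_le_mul_of_nonneg_right hm.le hY0
    have h6 : Ψ (Cstar * Y (b * lam)) ≤ Ψ ((2 : ℝ) ^ m * Y (b * lam)) :=
      hmono (Set.mem_Ici.2 hv0) (Set.mem_Ici.2 (by positivity)) hv1
    have h7 : Ψ ((2 : ℝ) ^ m * Y (b * lam)) ≤ β₂ ^ m * Ψ (Y (b * lam)) :=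
      huppow m _ hY0
    have hcomb : β₂ * (Ψ (X lam) / β₁ ^ k + β₂ ^ m * Ψ (Y (b * lam)))
        = θ * Ψ (X lam) + β₂ ^ (m + 1) * Ψ (Y (b * lam)) := by
      rw [hθ_def]; field_simp; ring
    calc Ψ (X (a * lam))
        ≤ β₂ * (Ψ (Cstar * (ε * X lam)) + Ψ (Cstar * Y (b * lam))) := h2.trans h3
      _ ≤ β₂ * (Ψ (X lam) / β₁ ^ k + β₂ ^ m * Ψ (Y (b * lam))) :=
          mul_le_mul_of_nonneg_left (add_le_add (h4.trans h5') (h6.trans h7)) hβ₂0.le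
      _ = θ * Ψ (X lam) + β₂ ^ (m + 1) * Ψ (Y (b * lam)) := hcomb
  -- pointwise estimate after raising to power t and multiplying by lam
  have hpt2 : ∀ lam : ℝ, 0 < lam →
      lam * Ψ (X (a * lam)) ^ t ≤
        c₁ * (lam * Ψ (X lam) ^ t) + c₂ * (lam * Ψ (Y (b * lam)) ^ t) := by
    intro lam hlam
    have hX0 : 0 ≤ Ψ (X lam) := hΨ0 _ (hX _ hlam)
    have hY0 : 0 ≤ Ψ (Y (b * lam)) := hΨ0 _ (hY _ (mul_pos hb hlam))
    have hXa0 : 0 ≤ Ψ (X (a * lam)) := hΨ0 _ (hX _ (mul_pos ha hlam))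
    have hA : 0 ≤ θ * Ψ (X lam) := by positivity
    have hB : 0 ≤ β₂ ^ (m + 1) * Ψ (Y (b * lam)) := by positivity
    have h1 : Ψ (X (a * lam)) ^ t ≤
        (θ * Ψ (X lam) + β₂ ^ (m + 1) * Ψ (Y (b * lam))) ^ t :=
      Real.rpow_le_rpow hXa0 (hpt lam hlam) ht.le
    have h2 := hrpow_sum _ _ hA hB
    have h3 : (θ * Ψ (X lam)) ^ t = θ ^ t * Ψ (X lam) ^ t :=
      Real.mul_rpow hθ.le hX0
    have h4 : (β₂ ^ (m + 1) * Ψ (Y (b * lam))) ^ t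
        = (β₂ ^ (m + 1)) ^ t * Ψ (Y (b * lam)) ^ t :=
      Real.mul_rpow (by positivity) hY0
    have h5 : Ψ (X (a * lam)) ^ t ≤
        c₁ * Ψ (X lam) ^ t + c₂ * Ψ (Y (b * lam)) ^ t := by
      rw [hc₁_def, hc₂_def]
      calc Ψ (X (a * lam)) ^ t
          ≤ 2 ^ t * ((θ * Ψ (X lam)) ^ t + (β₂ ^ (m + 1) * Ψ (Y (b * lam))) ^ t) :=
            le_trans h1 h2
        _ = 2 ^ t * θ ^ t * Ψ (X lam) ^ t
            + 2 ^ t * (β₂ ^ (m + 1)) ^ t * Ψ (Y (b * lam)) ^ t := by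
            rw [h3, h4]; ring
    calc lam * Ψ (X (a * lam)) ^ t
        ≤ lam * (c₁ * Ψ (X lam) ^ t + c₂ * Ψ (Y (b * lam)) ^ t) :=
          mul_le_mul_of_nonneg_left h5 hlam.le
      _ = c₁ * (lam * Ψ (X lam) ^ t) + c₂ * (lam * Ψ (Y (b * lam)) ^ t) := by ring
  -- in ℝ≥0∞
  have key : ∀ lam : ℝ, 0 < lam →
      ENNReal.ofReal (lam * Ψ (X (a * lam)) ^ t) ≤
        ENNReal.ofReal c₁ * MX + ENNReal.ofReal (c₂ * b⁻¹) * MY := by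
    intro lam hlam
    have hX0 : 0 ≤ Ψ (X lam) := hΨ0 _ (hX _ hlam)
    have hY0 : 0 ≤ Ψ (Y (b * lam)) := hΨ0 _ (hY _ (mul_pos hb hlam))
    have hxt : 0 ≤ lam * Ψ (X lam) ^ t := by positivity
    have hyt : 0 ≤ lam * Ψ (Y (b * lam)) ^ t := by positivity
    have h1 : ENNReal.ofReal (lam * Ψ (X (a * lam)) ^ t) ≤
        ENNReal.ofReal (c₁ * (lam * Ψ (X lam) ^ t)
          + c₂ * (lam * Ψ (Y (b * lam)) ^ t)) :=
      ENNReal.ofReal_le_ofReal (hpt2 lam hlam)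
    have h2 : ENNReal.ofReal (c₁ * (lam * Ψ (X lam) ^ t)
          + c₂ * (lam * Ψ (Y (b * lam)) ^ t))
        = ENNReal.ofReal c₁ * ENNReal.ofReal (lam * Ψ (X lam) ^ t)
          + ENNReal.ofReal c₂ * ENNReal.ofReal (lam * Ψ (Y (b * lam)) ^ t) := by
      rw [ENNReal.ofReal_add (by positivity) (by positivity),
        ENNReal.ofReal_mul hc₁.le, ENNReal.ofReal_mul hc₂.le]
    have h3 : ENNReal.ofReal (lam * Ψ (X lam) ^ t) ≤ MX := by
      rw [hMX_def]
      exact le_iSup₂ (f := fun lam (_ : 0 < lam) =>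
        ENNReal.ofReal (lam * Ψ (X lam) ^ t)) lam hlam
    have h4 : ENNReal.ofReal c₂ * ENNReal.ofReal (lam * Ψ (Y (b * lam)) ^ t) ≤
        ENNReal.ofReal (c₂ * b⁻¹) * MY := by
      have he : lam * Ψ (Y (b * lam)) ^ t = b⁻¹ * (b * lam * Ψ (Y (b * lam)) ^ t) := by
        field_simp
      have h5 : ENNReal.ofReal (b * lam * Ψ (Y (b * lam)) ^ t) ≤ MY := by
        rw [hMY_def]
        exact le_iSup₂ (f := fun lam (_ : 0 < lam) =>
          ENNReal.ofReal (lam * Ψ (Y lam) ^ t)) (b * lam) (mul_pos hb hlam)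
      calc ENNReal.ofReal c₂ * ENNReal.ofReal (lam * Ψ (Y (b * lam)) ^ t)
          = ENNReal.ofReal (c₂ * b⁻¹) *
              ENNReal.ofReal (b * lam * Ψ (Y (b * lam)) ^ t) := by
            rw [ENNReal.ofReal_mul hc₂.le, mul_assoc,
              ← ENNReal.ofReal_mul (inv_nonneg.2 hb.le), ← he]
        _ ≤ ENNReal.ofReal (c₂ * b⁻¹) * MY := mul_le_mul_right h5 _
    calc ENNReal.ofReal (lam * Ψ (X (a * lam)) ^ t)
        ≤ ENNReal.ofReal c₁ * ENNReal.ofReal (lam * Ψ (X lam) ^ t)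
          + ENNReal.ofReal c₂ * ENNReal.ofReal (lam * Ψ (Y (b * lam)) ^ t) :=
          h1.trans h2.le
      _ ≤ ENNReal.ofReal c₁ * MX + ENNReal.ofReal (c₂ * b⁻¹) * MY :=
          add_le_add (mul_le_mul_right h3 _) h4
  -- bound MX by scaling
  have hMX : MX ≤ ENNReal.ofReal (a * c₁) * MX
      + ENNReal.ofReal (a * (c₂ * b⁻¹)) * MY := by
    rw [hMX_def]
    apply iSup₂_le
    intro lam hlam
    have he : a * (lam / a) = lam := by field_simp
    have hla : 0 < lam / a := div_pos hlam ha
    have h1 : ENNReal.ofReal (lam * Ψ (X lam) ^ t)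
        = ENNReal.ofReal a * ENNReal.ofReal ((lam / a) * Ψ (X (a * (lam / a))) ^ t) := by
      rw [he, ← ENNReal.ofReal_mul ha.le]
      congr 1
      field_simp
    rw [h1]
    calc ENNReal.ofReal a * ENNReal.ofReal ((lam / a) * Ψ (X (a * (lam / a))) ^ t)
        ≤ ENNReal.ofReal a *
            (ENNReal.ofReal c₁ * MX + ENNReal.ofReal (c₂ * b⁻¹) * MY) :=
          mul_le_mul_right (key (lam / a) hla) _
      _ = ENNReal.ofReal (a * c₁) * MX + ENNReal.ofReal (a * (c₂ * b⁻¹)) * MY := by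
          rw [mul_add, ← mul_assoc, ← mul_assoc,
            ← ENNReal.ofReal_mul ha.le, ← ENNReal.ofReal_mul ha.le]
  -- absorption
  have hofhalf : ENNReal.ofReal (a * c₁) ≤ 2⁻¹ := by
    have h1 : ENNReal.ofReal (a * c₁) ≤ ENNReal.ofReal (1 / 2) :=
      ENNReal.ofReal_le_ofReal hhalf
    have h2 : ENNReal.ofReal (1 / 2 : ℝ) = 2⁻¹ := by
      rw [one_div, ENNReal.ofReal_inv_of_pos (by norm_num)]
      norm_num
    rwa [h2] at h1
  have hMX2 : MX ≤ 2⁻¹ * MX + ENNReal.ofReal (a * (c₂ * b⁻¹)) * MY :=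
    hMX.trans (add_le_add_left (mul_le_mul_left hofhalf MX) _)
  have hMXfin : MX ≠ ⊤ := hfin
  have habs : MX ≤ 2 * (ENNReal.ofReal (a * (c₂ * b⁻¹)) * MY) := by
    set Z := ENNReal.ofReal (a * (c₂ * b⁻¹)) * MY with hZ
    have hhalves : MX / 2 + MX / 2 = MX := ENNReal.add_halves MX
    have hdt : MX / 2 ≠ ⊤ := (ENNReal.div_lt_top hMXfin (by norm_num)).ne
    have h1 : MX / 2 + MX / 2 ≤ MX / 2 + Z := by
      rw [hhalves]
      have : (2 : ℝ≥0∞)⁻¹ * MX = MX / 2 := by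
        rw [ENNReal.div_eq_inv_mul]
      rw [← this]
      exact hMX2
    have h2 : MX / 2 ≤ Z := (ENNReal.add_le_add_iff_left hdt).1 h1
    calc MX = MX / 2 * 2 := (ENNReal.div_mul_cancel (by norm_num) (by norm_num)).symm
      _ ≤ Z * 2 := mul_le_mul_left h2 _
      _ = 2 * Z := mul_comm _ _
  calc MX ≤ 2 * (ENNReal.ofReal (a * (c₂ * b⁻¹)) * MY) := habs
    _ = ENNReal.ofReal (2 * (a * (c₂ * b⁻¹))) * MY := by
        conv_rhs => rw [ENNReal.ofReal_mul (by norm_num : (0:ℝ) ≤ 2)]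
        rw [ENNReal.ofReal_ofNat]
        ring
end

section
/- Let 0 < s < ∞, a, b > 0, C ≥ 1, and let ε > 0 satisfy C a^s ε ≤ 1/2. Suppose X, Y : (0, ∞) → [0, ∞) are measurable functions such that ∫₀^∞ λ^{s−1} X(λ) dλ < ∞ and X(aλ) ≤ C (ε X(λ) + Y(bλ)) for all λ > 0. Then ∫₀^∞ λ^{s−1} X(λ) dλ ≤ 2 C (a/b)^s ∫₀^∞ λ^{s−1} Y(λ) dλ. -/
open MeasureTheory
open scoped ENNReal

lemma scale_lintegral_Ioi (c : ℝ) (hc : 0 < c) (g : ℝ → ℝ≥0∞) (hg : Measurable g) :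
    ∫⁻ x in Set.Ioi (0:ℝ), g (c * x) = ENNReal.ofReal c⁻¹ * ∫⁻ x in Set.Ioi (0:ℝ), g x := by
  have h1 : ∀ x, (Set.Ioi (0:ℝ)).indicator (fun x => g (c*x)) x
      = (Set.Ioi (0:ℝ)).indicator g (c*x) := by
    intro x
    by_cases hx : x ∈ Set.Ioi (0:ℝ)
    · rw [Set.indicator_of_mem hx, Set.indicator_of_mem (by simpa using mul_pos hc hx)]
    · rw [Set.indicator_of_notMem hx, Set.indicator_of_notMem]
      simp only [Set.mem_Ioi, not_lt] at hx ⊢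
      nlinarith
  rw [← lintegral_indicator measurableSet_Ioi (fun x => g (c*x)),
    ← lintegral_indicator measurableSet_Ioi g]
  simp_rw [h1]
  rw [← lintegral_map (hg.indicator measurableSet_Ioi) (measurable_const_mul c),
    Real.map_volume_mul_left (ne_of_gt hc), lintegral_smul_measure, smul_eq_mul,
    abs_of_pos (inv_pos.mpr hc)]

lemma key_scale (c s : ℝ) (hc : 0 < c) (Z : ℝ → ℝ) (hZ : Measurable Z) :
    ENNReal.ofReal (c ^ s) *
      ∫⁻ x in Set.Ioi (0:ℝ), ENNReal.ofReal (x ^ (s-1) * Z (c * x)) =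
      ∫⁻ x in Set.Ioi (0:ℝ), ENNReal.ofReal (x ^ (s-1) * Z x) := by
  have hscale := scale_lintegral_Ioi c hc (fun x => ENNReal.ofReal (x ^ (s-1) * Z x))
    (by fun_prop)
  have hcong : ∫⁻ x in Set.Ioi (0:ℝ), ENNReal.ofReal ((c*x) ^ (s-1) * Z (c * x))
      = ENNReal.ofReal (c ^ (s-1)) *
        ∫⁻ x in Set.Ioi (0:ℝ), ENNReal.ofReal (x ^ (s-1) * Z (c * x)) := by
    rw [← lintegral_const_mul' _ _ ENNReal.ofReal_ne_top]
    refine setLIntegral_congr_fun measurableSet_Ioi ?_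
    intro x hx
    rw [Set.mem_Ioi] at hx
    dsimp only
    rw [Real.mul_rpow hc.le hx.le, mul_assoc,
      ENNReal.ofReal_mul (Real.rpow_nonneg hc.le _)]
  rw [hcong] at hscale
  have : ENNReal.ofReal c * (ENNReal.ofReal (c ^ (s-1)) *
      ∫⁻ x in Set.Ioi (0:ℝ), ENNReal.ofReal (x ^ (s-1) * Z (c * x)))
      = ENNReal.ofReal c * (ENNReal.ofReal c⁻¹ *
      ∫⁻ x in Set.Ioi (0:ℝ), ENNReal.ofReal (x ^ (s-1) * Z x)) := by rw [hscale]
  rw [← mul_assoc, ← mul_assoc, ← ENNReal.ofReal_mul hc.le, ← ENNReal.ofReal_mul hc.le,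
    mul_inv_cancel₀ hc.ne', ENNReal.ofReal_one, one_mul] at this
  rw [← this]
  congr 2
  rw [show c * c ^ (s-1) = c ^ (1:ℝ) * c ^ (s-1) by rw [Real.rpow_one],
    ← Real.rpow_add hc]
  ring_nf

/-- Layer-cake absorption lemma: if `C a^s ε ≤ 1/2`, the `X`-integral is finite,
and `X(aλ) ≤ C (ε X(λ) + Y(bλ))` for all `λ > 0`, then
`∫₀^∞ λ^{s−1} X(λ) dλ ≤ 2 C (a/b)^s ∫₀^∞ λ^{s−1} Y(λ) dλ`. -/
theorem layer_cake_absorption (s a b C ε : ℝ) (hs : 0 < s) (ha : 0 < a) (hb : 0 < b)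
    (hC : 1 ≤ C) (hε : 0 < ε) (hsmall : C * a ^ s * ε ≤ 1 / 2)
    (X Y : ℝ → ℝ) (hXm : Measurable X) (hYm : Measurable Y)
    (hX0 : ∀ lam, 0 < lam → 0 ≤ X lam) (hY0 : ∀ lam, 0 < lam → 0 ≤ Y lam)
    (hXfin : (∫⁻ lam in Set.Ioi (0 : ℝ),
        ENNReal.ofReal (lam ^ (s - 1) * X lam)) ≠ ⊤)
    (hlevel : ∀ lam, 0 < lam → X (a * lam) ≤ C * (ε * X lam + Y (b * lam))) :
    (∫⁻ lam in Set.Ioi (0 : ℝ), ENNReal.ofReal (lam ^ (s - 1) * X lam)) ≤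
      ENNReal.ofReal (2 * C * (a / b) ^ s) *
        ∫⁻ lam in Set.Ioi (0 : ℝ), ENNReal.ofReal (lam ^ (s - 1) * Y lam) := by
  set I := ∫⁻ lam in Set.Ioi (0 : ℝ), ENNReal.ofReal (lam ^ (s - 1) * X lam) with hI
  set J := ∫⁻ lam in Set.Ioi (0 : ℝ), ENNReal.ofReal (lam ^ (s - 1) * Y lam) with hJ
  set K := ∫⁻ lam in Set.Ioi (0 : ℝ), ENNReal.ofReal (lam ^ (s - 1) * X (a * lam)) with hK
  set L := ∫⁻ lam in Set.Ioi (0 : ℝ), ENNReal.ofReal (lam ^ (s - 1) * Y (b * lam)) with hL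
  have hIK : ENNReal.ofReal (a ^ s) * K = I := key_scale a s ha X hXm
  have hJL : ENNReal.ofReal (b ^ s) * L = J := key_scale b s hb Y hYm
  -- pointwise estimate
  have hKbound : K ≤ ENNReal.ofReal (C * ε) * I + ENNReal.ofReal C * L := by
    rw [hI, hK, hL, ← lintegral_const_mul' _ _ ENNReal.ofReal_ne_top,
      ← lintegral_const_mul' _ _ ENNReal.ofReal_ne_top, ← lintegral_add_left (by fun_prop)]
    refine setLIntegral_mono (by fun_prop) ?_
    intro lam hlam
    rw [Set.mem_Ioi] at hlam
    have hpow : (0:ℝ) ≤ lam ^ (s-1) := Real.rpow_nonneg hlam.le _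
    calc ENNReal.ofReal (lam ^ (s-1) * X (a*lam))
        ≤ ENNReal.ofReal (C * ε * (lam ^ (s-1) * X lam) + C * (lam ^ (s-1) * Y (b*lam))) := by
          apply ENNReal.ofReal_le_ofReal
          have := hlevel lam hlam
          nlinarith [mul_le_mul_of_nonneg_left this hpow]
      _ ≤ ENNReal.ofReal (C * ε * (lam ^ (s-1) * X lam))
            + ENNReal.ofReal (C * (lam ^ (s-1) * Y (b*lam))) := ENNReal.ofReal_add_le
      _ = ENNReal.ofReal (C * ε) * ENNReal.ofReal (lam ^ (s-1) * X lam)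
            + ENNReal.ofReal C * ENNReal.ofReal (lam ^ (s-1) * Y (b*lam)) := by
          rw [ENNReal.ofReal_mul (by positivity), ENNReal.ofReal_mul (by linarith),
            ENNReal.ofReal_mul (show (0:ℝ) ≤ C by linarith)]
  have has : (0:ℝ) < a ^ s := Real.rpow_pos_of_pos ha s
  have hbs : (0:ℝ) < b ^ s := Real.rpow_pos_of_pos hb s
  have hLJ : L = (ENNReal.ofReal (b ^ s))⁻¹ * J := by
    rw [← hJL, ← mul_assoc, ENNReal.inv_mul_cancel (by simp [hbs]) ENNReal.ofReal_ne_top,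
      one_mul]
  have hmain : I ≤ ENNReal.ofReal (C * a ^ s * ε) * I
      + ENNReal.ofReal (a ^ s * C) * ((ENNReal.ofReal (b ^ s))⁻¹ * J) := by
    calc I = ENNReal.ofReal (a ^ s) * K := hIK.symm
      _ ≤ ENNReal.ofReal (a ^ s) * (ENNReal.ofReal (C * ε) * I + ENNReal.ofReal C * L) :=
          mul_le_mul_right hKbound _
      _ = ENNReal.ofReal (C * a ^ s * ε) * I
            + ENNReal.ofReal (a ^ s * C) * ((ENNReal.ofReal (b ^ s))⁻¹ * J) := by
          rw [mul_add, ← mul_assoc, ← mul_assoc, ← ENNReal.ofReal_mul has.le,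
            ← ENNReal.ofReal_mul has.le, hLJ]
          ring_nf
  have hhalf : ENNReal.ofReal (C * a ^ s * ε) ≤ 2⁻¹ := by
    calc ENNReal.ofReal (C * a ^ s * ε) ≤ ENNReal.ofReal (1/2) :=
        ENNReal.ofReal_le_ofReal hsmall
      _ = 2⁻¹ := by rw [one_div, ENNReal.ofReal_inv_of_pos two_pos, ENNReal.ofReal_ofNat]
  set M := ENNReal.ofReal (a ^ s * C) * ((ENNReal.ofReal (b ^ s))⁻¹ * J) with hM
  have h1 : I ≤ 2⁻¹ * I + M := le_trans hmain (by
    exact add_le_add_left (mul_le_mul_left hhalf I) M)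
  have h2 : 2 * I ≤ I + 2 * M := by
    calc 2 * I ≤ 2 * (2⁻¹ * I + M) := mul_le_mul_right h1 2
      _ = I + 2 * M := by
          rw [mul_add, ← mul_assoc, ENNReal.mul_inv_cancel two_ne_zero ENNReal.ofNat_ne_top,
            one_mul]
  rw [two_mul] at h2
  have hfin : I ≤ 2 * M := by
    rwa [ENNReal.add_le_add_iff_left hXfin] at h2
  refine le_trans hfin ?_
  have : ENNReal.ofReal (2 * C * (a / b) ^ s) = 2 * M / J * J ∨ True := Or.inr trivial
  have hcoeff : ENNReal.ofReal (2 * C * (a / b) ^ s) * J = 2 * M := by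
    rw [hM, Real.div_rpow ha.le hb.le, div_eq_mul_inv, ← Real.rpow_neg hb.le]
    rw [show (2 * C * (a ^ s * (b:ℝ) ^ (-s))) = 2 * ((a ^ s * C) * b ^ (-s)) by ring]
    rw [ENNReal.ofReal_mul (by norm_num), ENNReal.ofReal_mul (by positivity),
      ENNReal.ofReal_ofNat, Real.rpow_neg hb.le,
      ENNReal.ofReal_inv_of_pos hbs]
    ring
  rw [hcoeff]
end

section
/- Let d ≥ 1, ϑ ∈ (0, 1], and let β₀ ∈ (1, 2^{dϑ}). Let y ∈ ℝ^d, ρ > 0, K ≥ 0, let G : ℝ^d → [0, ∞) be locally integrable, and let ψ : (0, ∞) → (0, ∞) satisfy ψ(2r) ≤ β₀ ψ(r) for all r > 0 and ∫_{B_r(y)} G(x) dx ≤ ψ(r) K for all r > 0. Then ∫_{ℝ^d} G(x) [M(χ_{B_ρ(y)})(x)]^{ϑ} dx ≤ C ψ(ρ) K, where C depends only on d, ϑ and β₀ (one may take C = β₀ (1 + 2^d Σ_{n≥1} (β₀ / 2^{dϑ})^n )). -/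
open MeasureTheory Metric
open scoped ENNReal

lemma aux_pow_calc (d n : ℕ) (ϑ : ℝ) :
    ((((2:ℝ)^n)⁻¹) ^ d) ^ ϑ = ((2:ℝ) ^ (-((d:ℝ)*ϑ))) ^ n := by
  have h1 : (((2:ℝ)^n)⁻¹) ^ d = (2:ℝ) ^ (-(((n*d : ℕ)):ℝ)) := by
    rw [inv_pow, ← pow_mul, ← Real.rpow_natCast (2:ℝ) (n*d),
      ← Real.rpow_neg (by norm_num : (0:ℝ) ≤ 2)]
  rw [h1, ← Real.rpow_natCast ((2:ℝ) ^ (-((d:ℝ)*ϑ))) n,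
    ← Real.rpow_mul (by norm_num : (0:ℝ) ≤ 2),
    ← Real.rpow_mul (by norm_num : (0:ℝ) ≤ 2)]
  congr 1
  push_cast
  ring

/-- Dyadic-annulus summation: let `ϑ ∈ (0,1]` and `β₀ ∈ (1, 2^{dϑ})`. There is
`C = C(d, ϑ, β₀) > 0` such that whenever `G ≥ 0` is locally integrable,
`ψ` is doubling with constant `β₀`, and `∫_{B_r(y)} G ≤ ψ(r) K` for all `r > 0`,
then `∫_{ℝ^d} G(x) (M χ_{B_ρ(y)} (x))^ϑ dx ≤ C ψ(ρ) K`. -/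
theorem dyadic_annulus_summation (d : ℕ) (hd : 1 ≤ d)
    (ϑ : ℝ) (hϑ0 : 0 < ϑ) (hϑ1 : ϑ ≤ 1)
    (β₀ : ℝ) (hβ₀1 : 1 < β₀) (hβ₀2 : β₀ < (2 : ℝ) ^ ((d : ℝ) * ϑ)) :
    ∃ C : ℝ, 0 < C ∧
      ∀ (y : EuclideanSpace ℝ (Fin d)) (ρ K : ℝ), 0 < ρ → 0 ≤ K →
      ∀ G : EuclideanSpace ℝ (Fin d) → ℝ, (∀ x, 0 ≤ G x) →
        LocallyIntegrable G volume →
      ∀ ψ : ℝ → ℝ, (∀ r : ℝ, 0 < r → 0 < ψ r) →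
        (∀ r : ℝ, 0 < r → ψ (2 * r) ≤ β₀ * ψ r) →
        (∀ r : ℝ, 0 < r → (∫ x in ball y r, G x) ≤ ψ r * K) →
        (∫⁻ x, ENNReal.ofReal (G x) *
            (⨆ (r : ℝ) (_ : 0 < r),
              volume (ball x r ∩ ball y ρ) / volume (ball x r)) ^ ϑ) ≤
          ENNReal.ofReal (C * ψ ρ * K) := by
  haveI : Nonempty (Fin d) := Fin.pos_iff_nonempty.mp (by omega)
  have hβ₀0 : (0:ℝ) < β₀ := by linarith
  set t : ℝ := β₀ * (2:ℝ) ^ (-((d:ℝ) * ϑ)) with ht_def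
  have h2p : (0:ℝ) < (2:ℝ) ^ ((d:ℝ)*ϑ) := Real.rpow_pos_of_pos two_pos _
  have h2n : (0:ℝ) < (2:ℝ) ^ (-((d:ℝ)*ϑ)) := Real.rpow_pos_of_pos two_pos _
  have ht0 : 0 < t := mul_pos hβ₀0 h2n
  have ht1 : t < 1 := by
    rw [ht_def, Real.rpow_neg (by norm_num : (0:ℝ) ≤ 2)]
    rw [mul_inv_lt_iff₀ h2p, one_mul]
    exact hβ₀2
  have hC : 0 < β₀ + β₀^2 * (1 - t)⁻¹ := by
    have h1t : 0 < 1 - t := by linarith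
    positivity
  refine ⟨β₀ + β₀^2 * (1 - t)⁻¹, hC, ?_⟩
  intro y ρ K hρ hK G hG hGloc ψ hψpos hψdoub hψint
  set M : EuclideanSpace ℝ (Fin d) → ℝ≥0∞ := fun x => ⨆ (r : ℝ) (_ : 0 < r),
    volume (ball x r ∩ ball y ρ) / volume (ball x r) with hM_def
  set q : ℝ≥0∞ := ENNReal.ofReal ((2:ℝ) ^ (-((d:ℝ)*ϑ))) with hq_def
  -- basic integral bound on balls
  have hball : ∀ r : ℝ, 0 < r →
      (∫⁻ x in ball y r, ENNReal.ofReal (G x)) ≤ ENNReal.ofReal (ψ r * K) := by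
    intro r hr
    have hint : IntegrableOn G (ball y r) volume :=
      (hGloc.integrableOn_isCompact (isCompact_closedBall y r)).mono_set
        ball_subset_closedBall
    rw [← ofReal_integral_eq_lintegral_ofReal hint
      (ae_of_all _ hG)]
    exact ENNReal.ofReal_le_ofReal (hψint r hr)
  -- doubling iterate
  have hψpow : ∀ n : ℕ, ψ (2^n * ρ) ≤ β₀^n * ψ ρ := by
    intro n
    induction n with
    | zero => simp
    | succ n ih =>
      have h2nρ : (0:ℝ) < 2^n * ρ := by positivity
      have : ψ (2^(n+1) * ρ) = ψ (2 * (2^n * ρ)) := by ring_nf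
      rw [this]
      calc ψ (2 * (2^n * ρ)) ≤ β₀ * ψ (2^n * ρ) := hψdoub _ h2nρ
        _ ≤ β₀ * (β₀^n * ψ ρ) := mul_le_mul_of_nonneg_left ih hβ₀0.le
        _ = β₀^(n+1) * ψ ρ := by ring
  -- maximal function ≤ 1
  have hM1 : ∀ x, M x ≤ 1 := by
    intro x
    refine iSup₂_le fun r hr => ENNReal.div_le_of_le_mul ?_
    rw [one_mul]
    exact measure_mono Set.inter_subset_left
  -- decay bound
  have hMdecay : ∀ (x : EuclideanSpace ℝ (Fin d)) (s : ℝ), 2*ρ ≤ s → s ≤ dist x y →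
      M x ≤ ENNReal.ofReal ((2*ρ/s)^d) := by
    intro x s h2ρ hs
    have hs0 : 0 < s := by linarith
    refine iSup₂_le fun r hr => ?_
    rcases Set.eq_empty_or_nonempty (ball x r ∩ ball y ρ) with he | ⟨z, hz⟩
    · simp [he]
    · have hzx : dist z x < r := mem_ball.mp hz.1
      have hzy : dist z y < ρ := mem_ball.mp hz.2
      have hdxy : dist x y ≤ dist x z + dist z y := dist_triangle x z y
      rw [dist_comm x z] at hdxy
      have hrs : s/2 ≤ r := by linarith
      have hfr : Module.finrank ℝ (EuclideanSpace ℝ (Fin d)) = d := finrank_euclideanSpace_fin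
      calc volume (ball x r ∩ ball y ρ) / volume (ball x r)
          ≤ volume (ball y ρ) / volume (ball x (s/2)) :=
            ENNReal.div_le_div (measure_mono Set.inter_subset_right)
              (measure_mono (ball_subset_ball hrs))
        _ = ENNReal.ofReal (ρ^d) * volume (ball (0:EuclideanSpace ℝ (Fin d)) 1) /
              (ENNReal.ofReal ((s/2)^d) * volume (ball (0:EuclideanSpace ℝ (Fin d)) 1)) := by
            rw [Measure.addHaar_ball _ _ hρ.le,
              Measure.addHaar_ball _ _ (by positivity : (0:ℝ) ≤ s/2), hfr]
        _ = ENNReal.ofReal (ρ^d) / ENNReal.ofReal ((s/2)^d) :=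
            ENNReal.mul_div_mul_right _ _ (measure_ball_pos _ _ one_pos).ne'
              measure_ball_lt_top.ne
        _ = ENNReal.ofReal (ρ^d / (s/2)^d) :=
            (ENNReal.ofReal_div_of_pos (by positivity)).symm
        _ = ENNReal.ofReal ((2*ρ/s)^d) := by
            rw [← div_pow]
            congr 2
            field_simp
  -- dyadic balls
  set S : ℕ → Set (EuclideanSpace ℝ (Fin d)) := fun n => ball y (2^(n+1) * ρ) with hS_def
  have hSmono : Monotone S := by
    intro m n hmn
    exact ball_subset_ball
      (mul_le_mul_of_nonneg_right (pow_le_pow_right₀ one_le_two (by omega)) hρ.le)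
  have hSmeas : ∀ n, MeasurableSet (S n) := fun n => measurableSet_ball
  have hSunion : ⋃ n, S n = Set.univ := by
    ext x
    simp only [Set.mem_iUnion, hS_def, mem_ball, Set.mem_univ, iff_true]
    obtain ⟨n, hn⟩ := pow_unbounded_of_one_lt (dist x y / ρ) (one_lt_two (α := ℝ))
    exact ⟨n, lt_of_lt_of_le ((div_lt_iff₀ hρ).mp hn)
      (mul_le_mul_of_nonneg_right (pow_le_pow_right₀ one_le_two (by omega)) hρ.le)⟩
  -- bound on integrand in annulus
  have hannulus : ∀ (n : ℕ) (x : EuclideanSpace ℝ (Fin d)), x ∈ S (n+1) \ S n →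
      M x ^ ϑ ≤ q ^ n := by
    intro n x hx
    have hdist : 2^(n+1) * ρ ≤ dist x y := by
      have := hx.2
      simp only [hS_def, mem_ball, not_lt] at this
      exact this
    have h2ρ : 2*ρ ≤ 2^(n+1)*ρ := by
      have : (2:ℝ) ≤ 2^(n+1) := by
        calc (2:ℝ) = 2^1 := (pow_one 2).symm
        _ ≤ 2^(n+1) := pow_le_pow_right₀ one_le_two (by omega)
      nlinarith
    have hM := hMdecay x _ h2ρ hdist
    have hval : 2*ρ/(2^(n+1)*ρ) = ((2:ℝ)^n)⁻¹ := by
      field_simp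
      ring
    calc M x ^ ϑ ≤ (ENNReal.ofReal ((2*ρ/(2^(n+1)*ρ))^d)) ^ ϑ :=
        ENNReal.rpow_le_rpow hM hϑ0.le
      _ = ENNReal.ofReal (((((2:ℝ)^n)⁻¹)^d) ^ ϑ) := by
          rw [hval, ENNReal.ofReal_rpow_of_pos (by positivity)]
      _ = ENNReal.ofReal (((2:ℝ) ^ (-((d:ℝ)*ϑ))) ^ n) := by rw [aux_pow_calc]
      _ = q ^ n := by rw [hq_def, ENNReal.ofReal_pow h2n.le]
  -- main computation
  set F : EuclideanSpace ℝ (Fin d) → ℝ≥0∞ := fun x => ENNReal.ofReal (G x) * (M x) ^ ϑ with hF_def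
  have key : (∫⁻ x, F x) ≤ ENNReal.ofReal (β₀ * (ψ ρ * K)) +
      ∑' n : ℕ, q ^ n * ENNReal.ofReal (β₀^(n+2) * (ψ ρ * K)) := by
    have h1 : (∫⁻ x, F x) = ∑' n, ∫⁻ x in disjointed S n, F x := by
      rw [← lintegral_iUnion (MeasurableSet.disjointed hSmeas) (disjoint_disjointed S) F,
        iUnion_disjointed, hSunion, Measure.restrict_univ]
    rw [h1, tsum_eq_zero_add' ENNReal.summable]
    refine add_le_add ?_ (ENNReal.tsum_le_tsum fun n => ?_)
    · -- n = 0 term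
      rw [disjointed_zero]
      have hS0 : S 0 = ball y (2*ρ) := by
        simp [hS_def]
      calc (∫⁻ x in S 0, F x) ≤ ∫⁻ x in S 0, ENNReal.ofReal (G x) := by
            refine setLIntegral_mono' (hSmeas 0) fun x _ => ?_
            have : M x ^ ϑ ≤ 1 := by
              calc M x ^ ϑ ≤ (1:ℝ≥0∞) ^ ϑ := ENNReal.rpow_le_rpow (hM1 x) hϑ0.le
                _ = 1 := ENNReal.one_rpow ϑ
            calc ENNReal.ofReal (G x) * M x ^ ϑ ≤ ENNReal.ofReal (G x) * 1 :=
                mul_le_mul_right this _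
              _ = ENNReal.ofReal (G x) := mul_one _
        _ ≤ ENNReal.ofReal (ψ (2*ρ) * K) := by rw [hS0]; exact hball _ (by positivity)
        _ ≤ ENNReal.ofReal (β₀ * (ψ ρ * K)) := by
            refine ENNReal.ofReal_le_ofReal ?_
            have := hψdoub ρ hρ
            rw [← mul_assoc]
            exact mul_le_mul_of_nonneg_right this hK
    · -- n+1 term
      rw [show n + 1 = Order.succ n from rfl, hSmono.disjointed_succ (not_isMax n)]
      calc (∫⁻ x in S (n+1) \ S n, F x)
          ≤ ∫⁻ x in S (n+1) \ S n, ENNReal.ofReal (G x) * q ^ n := by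
            refine setLIntegral_mono' ((hSmeas (n+1)).diff (hSmeas n)) fun x hx => ?_
            exact mul_le_mul_right (hannulus n x hx) _
        _ = q ^ n * ∫⁻ x in S (n+1) \ S n, ENNReal.ofReal (G x) := by
            simp_rw [mul_comm (ENNReal.ofReal (G _)) (q^n)]
            exact lintegral_const_mul' _ _ (ENNReal.pow_ne_top ENNReal.ofReal_ne_top)
        _ ≤ q ^ n * ∫⁻ x in S (n+1), ENNReal.ofReal (G x) :=
            mul_le_mul_right (lintegral_mono_set Set.diff_subset) _
        _ ≤ q ^ n * ENNReal.ofReal (ψ (2^(n+2) * ρ) * K) :=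
            mul_le_mul_right (hball _ (by positivity)) _
        _ ≤ q ^ n * ENNReal.ofReal (β₀^(n+2) * (ψ ρ * K)) := by
            refine mul_le_mul_right (ENNReal.ofReal_le_ofReal ?_) _
            rw [← mul_assoc]
            exact mul_le_mul_of_nonneg_right (hψpow (n+2)) hK
  have hgoal : (∫⁻ x, ENNReal.ofReal (G x) *
      (⨆ (r : ℝ) (_ : 0 < r),
        volume (ball x r ∩ ball y ρ) / volume (ball x r)) ^ ϑ) = ∫⁻ x, F x := rfl
  rw [hgoal]
  refine le_trans key ?_
  -- arithmetic on the geometric series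
  have hc0 : 0 ≤ ψ ρ * K := mul_nonneg (hψpos ρ hρ).le hK
  have hsum : ∑' n : ℕ, q ^ n * ENNReal.ofReal (β₀^(n+2) * (ψ ρ * K)) =
      (1 - ENNReal.ofReal t)⁻¹ * (ENNReal.ofReal (β₀^2 * (ψ ρ * K))) := by
    have heach : ∀ n : ℕ, q ^ n * ENNReal.ofReal (β₀^(n+2) * (ψ ρ * K)) =
        (ENNReal.ofReal t) ^ n * ENNReal.ofReal (β₀^2 * (ψ ρ * K)) := by
      intro n
      rw [ENNReal.ofReal_mul (pow_nonneg hβ₀0.le _), ENNReal.ofReal_pow hβ₀0.le,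
        ENNReal.ofReal_mul (pow_nonneg hβ₀0.le _), ENNReal.ofReal_pow hβ₀0.le,
        ht_def, ENNReal.ofReal_mul hβ₀0.le, ← hq_def]
      ring
    simp_rw [heach]
    rw [ENNReal.tsum_mul_right, ENNReal.tsum_geometric]
  rw [hsum]
  have htlt : ENNReal.ofReal t < 1 := by
    rw [← ENNReal.ofReal_one]
    exact ENNReal.ofReal_lt_ofReal_iff_of_nonneg ht0.le |>.mpr ht1
  have hinv : (1 - ENNReal.ofReal t)⁻¹ = ENNReal.ofReal ((1-t)⁻¹) := by
    rw [← ENNReal.ofReal_one, ← ENNReal.ofReal_sub _ ht0.le,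
      ← ENNReal.ofReal_inv_of_pos (by linarith)]
  have h1t : (0:ℝ) < 1 - t := by linarith
  rw [hinv, ← ENNReal.ofReal_mul (inv_nonneg.mpr h1t.le),
    ← ENNReal.ofReal_add (mul_nonneg hβ₀0.le hc0)
      (mul_nonneg (inv_nonneg.mpr h1t.le) (mul_nonneg (by positivity) hc0))]
  refine ENNReal.ofReal_le_ofReal (le_of_eq ?_)
  ring
end
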